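/- Let g : [0,∞) → ℝ be continuous with g(0) = 0, C¹ on (0,∞), with lim_{s→0} s g'(s) = 0 and |s² g'(s²)| ≤ C s^{p-1} for s ≥ 1 (some C > 0, 1 < p < ∞). Define f(z) = g(|z|²)z on ℂ. Then there exists C' > 0 such that for all z₁, z₂ ∈ ℂ, |f(z₁) - f(z₂)| ≤ C' (1 + |z₁|^{p-1} + |z₂|^{p-1}) |z₁ - z₂|. -/

import Mathlib

set_option maxHeartbeats 1600000 in
/-- Locally-Lipschitz estimate for a gauge-invariant nonlinearity
`f(z) = g(|z|²) z` under Assumption 1: `g` continuous on `[0,∞)`, `g(0) = 0`,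
`g` is `C¹` on `(0,∞)`, `s g'(s) → 0` as `s → 0⁺`, and `|s² g'(s²)| ≤ C s^{p-1}`
for `s ≥ 1`. Then `|f(z₁) - f(z₂)| ≤ C' (1 + |z₁|^{p-1} + |z₂|^{p-1}) |z₁ - z₂|`. -/
theorem stmt_9 (g g' : ℝ → ℝ) (C p : ℝ) (hC : 0 < C) (hp : 1 < p)
    (hgcont : ContinuousOn g (Set.Ici (0 : ℝ)))
    (hg0 : g 0 = 0)
    (hgderiv : ∀ s ∈ Set.Ioi (0 : ℝ), HasDerivAt g (g' s) s)
    (hg'cont : ContinuousOn g' (Set.Ioi (0 : ℝ)))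
    (hlim : Filter.Tendsto (fun s => s * g' s)
      (nhdsWithin 0 (Set.Ioi (0 : ℝ))) (nhds 0))
    (hgrowth : ∀ s : ℝ, 1 ≤ s → |s ^ 2 * g' (s ^ 2)| ≤ C * s ^ (p - 1)) :
    ∃ C' > 0, ∀ z₁ z₂ : ℂ,
      ‖(g (‖z₁‖ ^ 2) : ℂ) * z₁
          - (g (‖z₂‖ ^ 2) : ℂ) * z₂‖
        ≤ C' * (1 + ‖z₁‖ ^ (p - 1) + ‖z₂‖ ^ (p - 1))
          * ‖z₁ - z₂‖ := by
  -- Step 1: bound `|s * g' s| ≤ M` on `(0, 1]`.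
  obtain ⟨δ, hδpos, hδ⟩ : ∃ δ > 0, ∀ s ∈ Set.Ioi (0 : ℝ), dist s 0 < δ →
      dist (s * g' s) 0 < 1 := Metric.tendsto_nhdsWithin_nhds.mp hlim 1 one_pos
  set δ₁ : ℝ := min δ 1 with hδ₁def
  have hδ₁pos : 0 < δ₁ := lt_min hδpos one_pos
  have hsub : Set.Icc (δ₁ / 2) 1 ⊆ Set.Ioi (0 : ℝ) := fun x hx => lt_of_lt_of_le
    (by linarith : (0 : ℝ) < δ₁ / 2) hx.1
  have hcontM : ContinuousOn (fun s => s * g' s) (Set.Icc (δ₁ / 2) 1) :=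
    (continuousOn_id.mul (hg'cont.mono hsub))
  obtain ⟨M₁, hM₁⟩ := (isCompact_Icc (a := δ₁ / 2) (b := 1)).exists_bound_of_continuousOn hcontM
  set M : ℝ := max 1 M₁ with hMdef
  have hM1 : (1 : ℝ) ≤ M := le_max_left _ _
  have hM0 : (0 : ℝ) ≤ M := by linarith
  have hM : ∀ s : ℝ, 0 < s → s ≤ 1 → |s * g' s| ≤ M := by
    intro s hs hs1
    rcases lt_or_ge s δ₁ with h | h
    · have hd : dist s 0 < δ := by
        rw [Real.dist_eq, sub_zero, abs_of_pos hs]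
        exact lt_of_lt_of_le h (min_le_left _ _)
      have := hδ s hs hd
      rw [Real.dist_eq, sub_zero] at this
      linarith
    · have hmem : s ∈ Set.Icc (δ₁ / 2) 1 := ⟨by linarith, hs1⟩
      have := hM₁ s hmem
      rw [Real.norm_eq_abs] at this
      exact this.trans (le_max_right _ _)
  -- Step 2: derivative of `r ↦ g (r²)`.
  have hD : ∀ r : ℝ, 0 < r → HasDerivAt (fun t => g (t ^ 2)) (g' (r ^ 2) * (2 * r)) r := by
    intro r hr
    have h1 : HasDerivAt (fun t : ℝ => t ^ 2) (2 * r) r := by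
      simpa using hasDerivAt_pow 2 r
    exact (hgderiv (r ^ 2) (Set.mem_Ioi.mpr (by positivity))).comp r h1
  -- Step 3: pointwise bound for `|r² g'(r²)|`.
  have hpt : ∀ r b : ℝ, 0 < r → r ≤ b → |r ^ 2 * g' (r ^ 2)| ≤ M + C * (1 + b ^ (p - 1)) := by
    intro r b hr hrb
    have hb0 : 0 ≤ b := le_trans hr.le hrb
    have hbp : 0 ≤ b ^ (p - 1) := Real.rpow_nonneg hb0 _
    rcases le_total r 1 with h1 | h1
    · have := hM (r ^ 2) (by positivity) (by nlinarith)
      nlinarith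
    · have h2 := hgrowth r h1
      have h3 : r ^ (p - 1) ≤ b ^ (p - 1) :=
        Real.rpow_le_rpow (by linarith) hrb (by linarith)
      nlinarith
  -- Step 4: weighted Lipschitz estimate.
  have hLip : ∀ a b : ℝ, 0 < a → a ≤ b →
      a * |g (b ^ 2) - g (a ^ 2)| ≤ 2 * (M + C * (1 + b ^ (p - 1))) * (b - a) := by
    intro a b ha hab
    set Q : ℝ := M + C * (1 + b ^ (p - 1)) with hQdef
    have hb0 : 0 < b := lt_of_lt_of_le ha hab
    have hQ0 : 0 ≤ Q := by
      have : 0 ≤ b ^ (p - 1) := Real.rpow_nonneg hb0.le _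
      nlinarith
    have hbound : ∀ r ∈ Set.Icc a b, ‖g' (r ^ 2) * (2 * r)‖ ≤ 2 * Q / a := by
      intro r hr
      have hr0 : 0 < r := lt_of_lt_of_le ha hr.1
      have h1 := hpt r b hr0 hr.2
      rw [abs_mul, abs_of_pos (by positivity : (0:ℝ) < r ^ 2)] at h1
      rw [Real.norm_eq_abs, abs_mul, abs_of_pos (by positivity : (0:ℝ) < 2 * r)]
      rw [le_div_iff₀ ha]
      nlinarith [abs_nonneg (g' (r ^ 2)), hr.1, hr0]
    have hmvt := Convex.norm_image_sub_le_of_norm_hasDerivWithin_le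
      (f := fun t => g (t ^ 2)) (f' := fun r => g' (r ^ 2) * (2 * r))
      (fun x hx => (hD x (lt_of_lt_of_le ha hx.1)).hasDerivWithinAt)
      hbound (convex_Icc a b) (Set.left_mem_Icc.mpr hab) (Set.right_mem_Icc.mpr hab)
    rw [Real.norm_eq_abs, Real.norm_eq_abs, abs_of_nonneg (by linarith : (0:ℝ) ≤ b - a)] at hmvt
    have := mul_le_mul_of_nonneg_left hmvt ha.le
    calc a * |g (b ^ 2) - g (a ^ 2)| ≤ a * (2 * Q / a * (b - a)) := this
      _ = 2 * Q * (b - a) := by field_simp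
  -- Step 5: growth bound `|g(r²)| ≤ (A₀ + D)(1 + r^{p-1})`.
  obtain ⟨A₀, hA₀⟩ := (isCompact_Icc (a := (0:ℝ)) (b := 1)).exists_bound_of_continuousOn
    (hgcont.comp (continuous_pow 2).continuousOn
      (fun r _ => Set.mem_Ici.mpr (by positivity)))
  simp only [Function.comp, Real.norm_eq_abs] at hA₀
  have hA₀0 : 0 ≤ A₀ := le_trans (abs_nonneg _) (hA₀ 0 ⟨le_refl _, zero_le_one⟩)
  set D : ℝ := 2 * C / (p - 1) with hDdef
  have hp1 : 0 < p - 1 := by linarith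
  have hD0 : 0 < D := by positivity
  have hDC : D * (p - 1) = 2 * C := by
    rw [hDdef, div_mul_cancel₀]
    exact ne_of_gt hp1
  have hmono : ∀ ε : ℝ, |ε| ≤ 1 →
      MonotoneOn (fun r => D * r ^ (p - 1) - ε * g (r ^ 2)) (Set.Ici (1 : ℝ)) := by
    intro ε hε
    apply monotoneOn_of_hasDerivWithinAt_nonneg (f' := fun r =>
      D * ((p - 1) * r ^ (p - 1 - 1)) - ε * (g' (r ^ 2) * (2 * r))) (convex_Ici 1)
    · apply ContinuousOn.sub
      · exact continuousOn_const.mul (continuousOn_id.rpow_const (fun x hx => Or.inl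
          (ne_of_gt (lt_of_lt_of_le one_pos hx))))
      · exact continuousOn_const.mul (hgcont.comp (continuous_pow 2).continuousOn
          (fun r _ => Set.mem_Ici.mpr (by positivity)))
    · intro r hr
      rw [interior_Ici] at hr
      have hr0 : 0 < r := lt_trans one_pos hr
      exact (((Real.hasDerivAt_rpow_const (Or.inl hr0.ne')).const_mul D).sub
        ((hD r hr0).const_mul ε)).hasDerivWithinAt
    · intro r hr
      rw [interior_Ici] at hr
      have hr0 : 0 < r := lt_trans one_pos hr
      have h1 := hgrowth r hr.le
      rw [abs_mul, abs_of_pos (by positivity : (0:ℝ) < r ^ 2)] at h1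
      have hsplit : r ^ (p - 1) = r ^ (p - 1 - 1) * r := by
        rw [← Real.rpow_add_one hr0.ne' (p - 1 - 1)]
        norm_num
      have ht0 : 0 ≤ r ^ (p - 1 - 1) := Real.rpow_nonneg hr0.le _
      have h2 : ε * (g' (r ^ 2) * (2 * r)) ≤ |g' (r ^ 2)| * (2 * r) := by
        have ha : ε * (g' (r ^ 2) * (2 * r)) ≤ |ε * (g' (r ^ 2) * (2 * r))| := le_abs_self _
        rw [abs_mul, abs_mul, abs_of_pos (by positivity : (0:ℝ) < 2 * r)] at ha
        have hb : |ε| * (|g' (r ^ 2)| * (2 * r)) ≤ 1 * (|g' (r ^ 2)| * (2 * r)) :=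
          mul_le_mul_of_nonneg_right hε (by positivity)
        linarith
      rw [hsplit] at h1
      have h3 : (|g' (r ^ 2)| * (2 * r)) * r ≤ (2 * C * r ^ (p - 1 - 1)) * r := by nlinarith
      have h4 : (ε * (g' (r ^ 2) * (2 * r))) * r ≤ (2 * C * r ^ (p - 1 - 1)) * r :=
        le_trans (mul_le_mul_of_nonneg_right h2 hr0.le) h3
      have h5 : ε * (g' (r ^ 2) * (2 * r)) ≤ 2 * C * r ^ (p - 1 - 1) :=
        le_of_mul_le_mul_right h4 hr0
      have h6 : D * ((p - 1) * r ^ (p - 1 - 1)) = 2 * C * r ^ (p - 1 - 1) := by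
        rw [← mul_assoc, hDC]
      linarith
  have hA : ∀ r : ℝ, 0 ≤ r → |g (r ^ 2)| ≤ (A₀ + D) * (1 + r ^ (p - 1)) := by
    intro r hr
    have hrp : 0 ≤ r ^ (p - 1) := Real.rpow_nonneg hr _
    rcases le_total r 1 with h1 | h1
    · have := hA₀ r ⟨hr, h1⟩
      nlinarith
    · have hplus := hmono 1 (by norm_num) (Set.mem_Ici.mpr le_rfl) (Set.mem_Ici.mpr h1) h1
      have hminus := hmono (-1) (by norm_num) (Set.mem_Ici.mpr le_rfl) (Set.mem_Ici.mpr h1) h1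
      simp only [one_pow, Real.one_rpow] at hplus hminus
      have hg1 := hA₀ 1 ⟨zero_le_one, le_refl _⟩
      simp only [one_pow] at hg1
      have h1p : 1 ≤ r ^ (p - 1) := by
        have := Real.one_rpow (p - 1)
        calc (1:ℝ) = 1 ^ (p - 1) := (Real.one_rpow _).symm
          _ ≤ r ^ (p - 1) := Real.rpow_le_rpow zero_le_one h1 (by linarith)
      rw [abs_le]
      rw [abs_le] at hg1
      constructor <;> nlinarith [mul_nonneg hA₀0 hrp, mul_nonneg hD0.le hrp]
  -- Step 6: assemble.
  set K : ℝ := (A₀ + D) + 2 * M + 4 * C with hKdef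
  refine ⟨K, by nlinarith, ?_⟩
  have key : ∀ z₁ z₂ : ℂ, ‖z₂‖ ≤ ‖z₁‖ →
      ‖(g (‖z₁‖ ^ 2) : ℂ) * z₁ - (g (‖z₂‖ ^ 2) : ℂ) * z₂‖
        ≤ K * (1 + ‖z₁‖ ^ (p - 1) + ‖z₂‖ ^ (p - 1))
          * ‖z₁ - z₂‖ := by
    intro z₁ z₂ hle
    set r₁ : ℝ := ‖z₁‖ with hr₁def
    set r₂ : ℝ := ‖z₂‖ with hr₂def
    have hr₁0 : 0 ≤ r₁ := norm_nonneg _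
    have hr₂0 : 0 ≤ r₂ := norm_nonneg _
    set d : ℝ := ‖z₁ - z₂‖ with hddef
    have hd0 : 0 ≤ d := norm_nonneg _
    have hdr : r₁ - r₂ ≤ d := by
      have := abs_norm_sub_norm_le z₁ z₂
      calc r₁ - r₂ ≤ |r₁ - r₂| := le_abs_self _
        _ ≤ d := this
    have hsplit : (g (r₁ ^ 2) : ℂ) * z₁ - (g (r₂ ^ 2) : ℂ) * z₂
        = (g (r₁ ^ 2) : ℂ) * (z₁ - z₂) + ((g (r₁ ^ 2) : ℂ) - (g (r₂ ^ 2) : ℂ)) * z₂ := by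
      ring
    have hterm1 : ‖(g (r₁ ^ 2) : ℂ) * (z₁ - z₂)‖ ≤ (A₀ + D) * (1 + r₁ ^ (p - 1)) * d := by
      rw [norm_mul, Complex.norm_real, Real.norm_eq_abs]
      have hco : 0 ≤ (A₀ + D) * (1 + r₁ ^ (p - 1)) :=
        mul_nonneg (by linarith) (by nlinarith [Real.rpow_nonneg hr₁0 (p - 1)])
      exact mul_le_mul (hA r₁ hr₁0) le_rfl hd0 hco
    have hterm2 : ‖((g (r₁ ^ 2) : ℂ) - (g (r₂ ^ 2) : ℂ)) * z₂‖
        ≤ 2 * (M + C * (1 + r₁ ^ (p - 1))) * d := by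
      rw [norm_mul]
      have hcast : ‖(g (r₁ ^ 2) : ℂ) - (g (r₂ ^ 2) : ℂ)‖ = |g (r₁ ^ 2) - g (r₂ ^ 2)| := by
        rw [← Complex.ofReal_sub, Complex.norm_real, Real.norm_eq_abs]
      rw [hcast, ← hr₂def]
      have hcoef : 0 ≤ 2 * (M + C * (1 + r₁ ^ (p - 1))) := by
        have : 0 ≤ r₁ ^ (p - 1) := Real.rpow_nonneg hr₁0 _
        nlinarith
      rcases eq_or_lt_of_le hr₂0 with h0 | h0
      · rw [← h0, mul_zero]
        exact mul_nonneg hcoef hd0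
      · have := hLip r₂ r₁ h0 hle
        calc |g (r₁ ^ 2) - g (r₂ ^ 2)| * r₂ = r₂ * |g (r₁ ^ 2) - g (r₂ ^ 2)| := by ring
          _ ≤ 2 * (M + C * (1 + r₁ ^ (p - 1))) * (r₁ - r₂) := this
          _ ≤ 2 * (M + C * (1 + r₁ ^ (p - 1))) * d := by
              exact mul_le_mul_of_nonneg_left hdr hcoef
    have htot : ‖(g (r₁ ^ 2) : ℂ) * z₁ - (g (r₂ ^ 2) : ℂ) * z₂‖
        ≤ (A₀ + D) * (1 + r₁ ^ (p - 1)) * d + 2 * (M + C * (1 + r₁ ^ (p - 1))) * d := by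
      rw [hsplit]
      exact le_trans (norm_add_le _ _) (add_le_add hterm1 hterm2)
    have hrp1 : 0 ≤ r₁ ^ (p - 1) := Real.rpow_nonneg hr₁0 _
    have hrp2 : 0 ≤ r₂ ^ (p - 1) := Real.rpow_nonneg hr₂0 _
    calc ‖(g (r₁ ^ 2) : ℂ) * z₁ - (g (r₂ ^ 2) : ℂ) * z₂‖
        ≤ (A₀ + D) * (1 + r₁ ^ (p - 1)) * d + 2 * (M + C * (1 + r₁ ^ (p - 1))) * d := htot
      _ ≤ K * (1 + r₁ ^ (p - 1) + r₂ ^ (p - 1)) * d := by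
          rw [hKdef]
          nlinarith [mul_nonneg hrp2 hd0, mul_nonneg (mul_nonneg hA₀0 hrp1) hd0,
            mul_nonneg (mul_nonneg hD0.le hrp1) hd0, mul_nonneg (mul_nonneg hC.le hrp1) hd0,
            mul_nonneg hM0 hd0, mul_nonneg hC.le hd0, mul_nonneg hA₀0 hd0, mul_nonneg hD0.le hd0,
            mul_nonneg (mul_nonneg hM0 hrp2) hd0, mul_nonneg (mul_nonneg hC.le hrp2) hd0]
  intro z₁ z₂
  rcases le_total (‖z₂‖) (‖z₁‖) with h | h
  · exact key z₁ z₂ h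
  · have h2 := key z₂ z₁ h
    have e1 : (g (‖z₁‖ ^ 2) : ℂ) * z₁ - (g (‖z₂‖ ^ 2) : ℂ) * z₂
        = -((g (‖z₂‖ ^ 2) : ℂ) * z₂ - (g (‖z₁‖ ^ 2) : ℂ) * z₁) := by ring
    have e2 : z₁ - z₂ = -(z₂ - z₁) := by ring
    rw [e1, norm_neg, e2, norm_neg]
    have e3 : K * (1 + ‖z₁‖ ^ (p - 1) + ‖z₂‖ ^ (p - 1))
          * ‖z₂ - z₁‖
        = K * (1 + ‖z₂‖ ^ (p - 1) + ‖z₁‖ ^ (p - 1))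
          * ‖z₂ - z₁‖ := by ring
    rw [e3]
    exact h2
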